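/- arXiv:1410.7583 — 6 statements merged into one kernel-verified Lean document; each statement's English description precedes it below -/
import Mathlib

section
/- Let n ≥ 2 and k ≥ 2 with ((k−1)/k)·n − √(n·log n) > 0 (real logarithm). Then every pseudo-PI-sequence with n states and k actions has size m ≤ k^n/n² + k^n/(((k−1)/k)·n − √(n·log n)) + 1. -/
/-!
Non-inclusion forces the policies of the sequence to be pairwise distinct, so its length is at most
`k ^ n`. Fix a set `S` of improvement states and, for each index `t` with `S_t = S`, an improving
action `w_t s` at every `s ∈ S`. The functions `x ↦ ∏_{s ∈ S} (𝟙[x s = σ_t s] - 𝟙[x s = w_t s])`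
take the value `1` at `σ_t` and, by non-inclusion, the value `0` at every earlier `σ_t'`, so they
are linearly independent. They lie in the image of the tensor power `⨂_{s ∈ S} V`, where `V` is the
`(k - 1)`-dimensional space of sum-zero functions of an action, so at most `(k - 1) ^ |S|` indices
have improvement-state set `S`.

Split the selected indices at `d = ⌊D⌋₊`, where `D = (k - 1) / k * n - √(n log n)`. Those with
`|S_t| ≤ d` number at most `∑_{i ≤ d} C(n, i) (k - 1) ^ i ≤ k ^ n / n ^ 2`, by Hoeffding's bound
on the lower tail of the binomial distribution with parameter `(k - 1) / k`. By the jumping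
property each of the others is followed by a gap of more than `D` steps, in a sequence of length at
most `k ^ n`.
-/

/-- A pseudo-PI-sequence of size `m` with `n` states and `k` actions:
a sequence of policies `σ 0, …, σ (L-1)` together with an improvement-set
assignment `T` satisfying the non-inclusion property, and a strictly
increasing choice of indices `idx 0 < … < idx (m-1)` satisfying the
jumping property. -/
structure PseudoPISeq (n k m : ℕ) where
  /-- length of the underlying sequence of policies -/
  L : ℕ
  /-- the underlying sequence of policies -/
  σ : Fin L → Fin n → Fin k
  /-- the improvement-set assignment -/
  T : Fin L → Set (Fin n × Fin k)
  /-- improvement sets never contain the currently chosen action -/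
  hT : ∀ t s, (s, σ t s) ∉ T t
  /-- the non-inclusion property: for `t < t'` there is an improvement state `s` of
  `σ t` with `σ t s ≠ σ t' s` and `(s, σ t s) ∉ T t'` -/
  nonincl : ∀ t t' : Fin L, t < t' →
    ∃ s, (∃ a, (s, a) ∈ T t) ∧ σ t s ≠ σ t' s ∧ (s, σ t s) ∉ T t'
  /-- the selected indices `t_0 < t_1 < … < t_{m-1}` -/
  idx : Fin m → Fin L
  idx_mono : StrictMono idx
  /-- the jumping property: `t_{j+1} - t_j ≥ |S_{t_j}| + 1` -/
  jump : ∀ j : ℕ, ∀ hj : j + 1 < m,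
    (idx ⟨j, Nat.lt_of_succ_lt hj⟩ : ℕ) +
      {s | ∃ a, (s, a) ∈ T (idx ⟨j, Nat.lt_of_succ_lt hj⟩)}.ncard + 1 ≤
      (idx ⟨j + 1, hj⟩ : ℕ)

open Finset Module Real MeasureTheory ProbabilityTheory

/-- Hoeffding's lemma for a Bernoulli(`p`) variable. -/
theorem one_sub_add_mul_exp_le (p t : ℝ) (hp0 : 0 ≤ p) (hp1 : p ≤ 1) :
    1 - p + p * exp t ≤ exp (p * t + t ^ 2 / 8) := by
  let μ : Measure Bool :=
    ENNReal.ofReal p • Measure.dirac true + ENNReal.ofReal (1 - p) • Measure.dirac false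
  have : IsProbabilityMeasure μ := ⟨by
    simp only [μ, Measure.coe_add, Measure.coe_smul, Pi.add_apply, Pi.smul_apply, measure_univ,
      smul_eq_mul, mul_one]
    rw [← ENNReal.ofReal_add hp0 (sub_nonneg.2 hp1), add_sub_cancel, ENNReal.ofReal_one]⟩
  have hint (f : Bool → ℝ) : ∫ b, f b ∂μ = p * f true + (1 - p) * f false := by
    rw [integral_fintype .of_finite]
    simp [μ, measureReal_def, hp0, sub_nonneg.2 hp1]
  let X : Bool → ℝ := fun b => if b then 1 else 0
  have h : p * exp (t * (1 - p)) + (1 - p) * exp (t * -p) ≤ exp (t ^ 2 / 8) := by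
    convert (hasSubgaussianMGF_of_mem_Icc (a := 0) (b := 1) (X := X) (μ := μ) (by fun_prop)
      (ae_of_all _ fun b => by cases b <;> simp [X])).mgf_le t using 2
    · simp [mgf, hint, X]
    · norm_num; ring
  calc 1 - p + p * exp t = exp (p * t) * (p * exp (t * (1 - p)) + (1 - p) * exp (t * -p)) := by
        rw [mul_add, mul_left_comm, ← exp_add, mul_left_comm (exp _), ← exp_add,
          show p * t + t * (1 - p) = t by ring, show p * t + t * -p = 0 by ring, exp_zero]
        ring
    _ ≤ exp (p * t) * exp (t ^ 2 / 8) := by gcongr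
    _ = exp (p * t + t ^ 2 / 8) := (exp_add _ _).symm

theorem sum_range_choose_mul_pow_le_exp (n d : ℕ) (p : ℝ) (hp0 : 0 ≤ p) (hp1 : p ≤ 1)
    (hn : 0 < n) (hd : (d : ℝ) ≤ p * n) :
    ∑ i ∈ range (d + 1), (n.choose i : ℝ) * p ^ i * (1 - p) ^ (n - i) ≤
      exp (-2 * (p * n - d) ^ 2 / n) := by
  have hnR : (0 : ℝ) < n := by exact_mod_cast hn
  have hdn : d ≤ n := by
    have : (d : ℝ) ≤ n := hd.trans (mul_le_of_le_one_left hnR.le hp1)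
    exact_mod_cast this
  have hq : 0 ≤ 1 - p := sub_nonneg.2 hp1
  set l := 4 * (p * n - d) / n with hl
  have hl0 : 0 ≤ l := div_nonneg (by linarith) hnR.le
  calc ∑ i ∈ range (d + 1), (n.choose i : ℝ) * p ^ i * (1 - p) ^ (n - i)
      ≤ ∑ i ∈ range (d + 1), (n.choose i : ℝ) * p ^ i * (1 - p) ^ (n - i) * exp (l * (d - i)) :=
        sum_le_sum fun i hi => le_mul_of_one_le_right (by positivity) <| one_le_exp <|
          mul_nonneg hl0 <| sub_nonneg.2 <| by exact_mod_cast mem_range_succ_iff.1 hi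
    _ ≤ ∑ i ∈ range (n + 1), (n.choose i : ℝ) * p ^ i * (1 - p) ^ (n - i) * exp (l * (d - i)) :=
        sum_le_sum_of_subset_of_nonneg (range_subset_range.2 (by omega)) fun _ _ _ => by positivity
    _ = exp (l * d) * (p * exp (-l) + (1 - p)) ^ n := by
        rw [add_pow, mul_sum]
        refine sum_congr rfl fun i _ => ?_
        rw [mul_pow, ← exp_nat_mul, show l * (d - i) = l * d + i * -l by ring, exp_add]
        ring
    _ ≤ exp (l * d) * exp (p * -l + (-l) ^ 2 / 8) ^ n := by
        gcongr
        linarith [one_sub_add_mul_exp_le p (-l) hp0 hp1]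
    _ = exp (-2 * (p * n - d) ^ 2 / n) := by
        rw [← exp_nat_mul, ← exp_add, hl]
        congr 1
        field_simp
        ring

theorem sum_range_choose_mul_pow_le_div_sq (n k d : ℕ) (hn : 0 < n) (hk : 0 < k)
    (hd : √(n * log n) ≤ ((k : ℝ) - 1) / k * n - d) :
    ∑ i ∈ range (d + 1), (n.choose i : ℝ) * ((k : ℝ) - 1) ^ i ≤ (k : ℝ) ^ n / (n : ℝ) ^ 2 := by
  have hnR : (0 : ℝ) < n := by exact_mod_cast hn
  have hkR : (0 : ℝ) < k := by exact_mod_cast hk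
  set p := ((k : ℝ) - 1) / k with hp
  have hp0 : 0 ≤ p := div_nonneg (by linarith [(Nat.one_le_cast (α := ℝ)).2 hk]) hkR.le
  have hp1 : p ≤ 1 := div_le_one_of_le₀ (by linarith) hkR.le
  have hdn : d ≤ n := by
    have : (d : ℝ) ≤ n := by nlinarith [sqrt_nonneg (n * log n)]
    exact_mod_cast this
  have hsq : n * log n ≤ (p * n - d) ^ 2 := by
    have hlog : 0 ≤ n * log n := mul_nonneg hnR.le (log_nonneg (by exact_mod_cast hn))
    calc (n : ℝ) * log n = √(n * log n) ^ 2 := (sq_sqrt hlog).symm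
      _ ≤ (p * n - d) ^ 2 := pow_le_pow_left₀ (sqrt_nonneg _) hd 2
  calc ∑ i ∈ range (d + 1), (n.choose i : ℝ) * ((k : ℝ) - 1) ^ i
      = k ^ n * ∑ i ∈ range (d + 1), (n.choose i : ℝ) * p ^ i * (1 - p) ^ (n - i) := by
        rw [mul_sum]
        refine sum_congr rfl fun i hi => ?_
        have hin : i ≤ n := (mem_range_succ_iff.1 hi).trans hdn
        rw [hp, one_sub_div hkR.ne', sub_sub_cancel, div_pow, one_div_pow,
          ← pow_mul_pow_sub (k : ℝ) hin]
        field_simp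
    _ ≤ k ^ n * exp (-2 * log n) := by
        gcongr
        refine (sum_range_choose_mul_pow_le_exp n d p hp0 hp1 hn
          (by linarith [sqrt_nonneg (n * log n)])).trans ?_
        gcongr
        rw [div_le_iff₀ hnR]
        nlinarith
    _ = k ^ n / n ^ 2 := by
        rw [neg_mul, exp_neg, show (2 : ℝ) * log n = ((2 : ℕ) : ℝ) * log n by norm_num,
          exp_nat_mul, exp_log hnR, div_eq_mul_inv]

theorem PiTensorProduct.finrank_eq_prod {K ι : Type*} [Field K] [Fintype ι] (M : ι → Type*)
    [∀ i, AddCommGroup (M i)] [∀ i, Module K (M i)] [∀ i, FiniteDimensional K (M i)] :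
    finrank K (PiTensorProduct K M) = ∏ i, finrank K (M i) := by
  classical
  simp [finrank_eq_card_basis (Basis.piTensorProduct fun i => finBasis K (M i))]

theorem finrank_span_range_prod_le {K α β ι : Type*} [Field K] [Finite β] (S : Finset α)
    (V : Submodule K (β → K)) (h : ι → α → β → K) (hV : ∀ i, ∀ s ∈ S, h i s ∈ V) :
    finrank K (Submodule.span K (Set.range fun i (x : α → β) => ∏ s ∈ S, h i s (x s))) ≤
      finrank K V ^ #S := by
  let Φ : MultilinearMap K (fun _ : S => V) ((α → β) → K) :=
    (MultilinearMap.mkPiAlgebra K S ((α → β) → K)).compLinearMap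
      fun s => LinearMap.funLeft K K (fun x : α → β => x s) ∘ₗ V.subtype
  have hspan : Submodule.span K (Set.range fun i (x : α → β) => ∏ s ∈ S, h i s (x s)) ≤
      LinearMap.range (PiTensorProduct.lift Φ) := by
    rw [Submodule.span_le]
    rintro _ ⟨i, rfl⟩
    refine ⟨PiTensorProduct.tprod K fun s => ⟨h i s, hV i s s.2⟩, ?_⟩
    ext x
    simp only [PiTensorProduct.lift.tprod, Φ, MultilinearMap.compLinearMap_apply,
      MultilinearMap.mkPiAlgebra_apply, LinearMap.comp_apply, LinearMap.funLeft_apply,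
      Submodule.subtype_apply, Finset.prod_apply]
    exact Finset.prod_coe_sort S fun s => h i s (x s)
  calc finrank K _ ≤ finrank K (LinearMap.range (PiTensorProduct.lift Φ)) :=
        Submodule.finrank_mono hspan
    _ ≤ finrank K (PiTensorProduct K fun _ : S => V) := LinearMap.finrank_range_le _
    _ = finrank K V ^ #S := by simp [PiTensorProduct.finrank_eq_prod]

theorem finrank_ker_sum_le {K β : Type*} [Field K] [CharZero K] [Fintype β] :
    finrank K (LinearMap.ker (Fintype.linearCombination K fun _ : β => (1 : K))) ≤
      Fintype.card β - 1 := by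
  set V := LinearMap.ker (Fintype.linearCombination K fun _ : β => (1 : K))
  have hle := Submodule.finrank_le V
  rw [Module.finrank_fintype_fun_eq_card] at hle
  rcases eq_or_ne (Fintype.card β) 0 with h0 | h0
  · omega
  have hV : V ≠ ⊤ := fun htop => by
    have : (fun _ => 1 : β → K) ∈ V := htop ▸ Submodule.mem_top
    simp [V, Fintype.linearCombination_apply, h0] at this
  have := Submodule.finrank_lt hV
  rw [Module.finrank_fintype_fun_eq_card] at this
  omega

theorem linearIndependent_of_apply_triangular {K ι X : Type*} [Field K] [LinearOrder ι]
    [Finite ι] {v : ι → X → K} (x : ι → X) (hdiag : ∀ i, v i (x i) ≠ 0)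
    (htri : ∀ i j, i < j → v j (x i) = 0) : LinearIndependent K v := by
  have := Fintype.ofFinite ι
  rw [Fintype.linearIndependent_iff]
  intro g hg i
  induction i using WellFoundedLT.induction with
  | _ i ih =>
    have hsum : ∑ j, g j * v j (x i) = g i * v i (x i) := by
      refine Fintype.sum_eq_single i fun j hji => ?_
      rcases hji.lt_or_gt with hlt | hgt
      · rw [ih j hlt, zero_mul]
      · rw [htri i j hgt, mul_zero]
    have := congrFun hg (x i)
    simp only [Finset.sum_apply, Pi.smul_apply, smul_eq_mul, Pi.zero_apply] at this
    exact (mul_eq_zero.1 (hsum ▸ this)).resolve_right (hdiag i)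

theorem add_sum_le_of_add_le_succ {r : ℕ} (a : Fin (r + 1) → ℕ) (c : Fin r → ℕ)
    (h : ∀ j, a j.castSucc + c j ≤ a j.succ) : a 0 + ∑ j, c j ≤ a (Fin.last r) := by
  induction r with
  | zero => simp
  | succ r ih =>
    rw [Fin.sum_univ_castSucc, ← add_assoc]
    calc a 0 + ∑ j : Fin r, c j.castSucc + c (Fin.last r)
        ≤ a (Fin.last r).castSucc + c (Fin.last r) := by
          gcongr
          exact ih (fun j => a j.castSucc) _ fun j => Fin.succ_castSucc j ▸ h j.castSucc
      _ ≤ a (Fin.last (r + 1)) := h (Fin.last r)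

namespace PseudoPISeq

section

variable {n k m : ℕ} (p : PseudoPISeq n k m)

open scoped Classical in
noncomputable def improvementStates (t : Fin p.L) : Finset (Fin n) := {s | ∃ a, (s, a) ∈ p.T t}

theorem mem_improvementStates {t : Fin p.L} {s : Fin n} :
    s ∈ p.improvementStates t ↔ ∃ a, (s, a) ∈ p.T t := by
  simp [improvementStates]

theorem ncard_improvementStates (t : Fin p.L) :
    {s | ∃ a, (s, a) ∈ p.T t}.ncard = #(p.improvementStates t) := by
  rw [← Set.ncard_coe_finset]
  congr
  ext
  simp [mem_improvementStates]

theorem σ_injective : Function.Injective p.σ := by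
  intro t t' h
  by_contra hne
  rcases lt_or_gt_of_ne hne with hlt | hlt
  · obtain ⟨s, -, hs, -⟩ := p.nonincl t t' hlt
    exact hs (congrFun h s)
  · obtain ⟨s, -, hs, -⟩ := p.nonincl t' t hlt
    exact hs (congrFun h s).symm

theorem L_le_pow : p.L ≤ k ^ n := by
  simpa using Fintype.card_le_of_injective _ p.σ_injective

theorem card_filter_improvementStates_eq_le (S : Finset (Fin n)) :
    #{t | p.improvementStates t = S} ≤ (k - 1) ^ #S := by
  have hw : ∀ t s, ∃ a, s ∈ p.improvementStates t → (s, a) ∈ p.T t := fun t s => by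
    by_cases hs : s ∈ p.improvementStates t
    · exact (p.mem_improvementStates.1 hs).imp fun _ ha _ => ha
    · exact ⟨p.σ t s, fun h => absurd h hs⟩
  choose w hw using hw
  let ι := {t // p.improvementStates t = S}
  let g : ι → Fin n → Fin k → ℝ := fun t s => Pi.single (p.σ t s) 1 - Pi.single (w t s) 1
  have hdiag : ∀ t : ι, ∏ s ∈ S, g t s (p.σ t s) ≠ 0 := fun t => by
    refine (prod_eq_one fun s hs => ?_).trans_ne one_ne_zero
    have hne : p.σ t s ≠ w t s := fun heq => p.hT t s (heq ▸ hw t s (by rw [t.2]; exact hs))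
    simp [g, hne]
  have htri : ∀ t t' : ι, t < t' → ∏ s ∈ S, g t' s (p.σ t s) = 0 := fun t t' hlt => by
    obtain ⟨s, hsT, hne, hnot⟩ := p.nonincl t t' hlt
    have hs : s ∈ S := t.2 ▸ p.mem_improvementStates.2 hsT
    have hne' : p.σ t s ≠ w t' s := fun heq => hnot (heq ▸ hw t' s (by rw [t'.2]; exact hs))
    refine prod_eq_zero hs ?_
    simp [g, hne, hne']
  let V := LinearMap.ker (Fintype.linearCombination ℝ fun _ : Fin k => (1 : ℝ))
  have hV : ∀ t s, g t s ∈ V := fun t s => by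
    simp [V, g, Fintype.linearCombination_apply]
  have hli : LinearIndependent ℝ fun (t : ι) (x : Fin n → Fin k) => ∏ s ∈ S, g t s (x s) :=
    linearIndependent_of_apply_triangular (fun t => p.σ t) hdiag htri
  calc #{t | p.improvementStates t = S} = Fintype.card ι := (Fintype.card_subtype _).symm
    _ = finrank ℝ (Submodule.span ℝ (Set.range _)) := (finrank_span_eq_card hli).symm
    _ ≤ finrank ℝ V ^ #S := finrank_span_range_prod_le S V g fun t s _ => hV t s
    _ ≤ (k - 1) ^ #S := by
        simpa using Nat.pow_le_pow_left (finrank_ker_sum_le (K := ℝ) (β := Fin k)) #S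

theorem card_filter_card_improvementStates_eq_le (i : ℕ) :
    #{t | #(p.improvementStates t) = i} ≤ n.choose i * (k - 1) ^ i := by
  calc #{t | #(p.improvementStates t) = i}
      = ∑ S ∈ powersetCard i univ,
          #{t ∈ {t | #(p.improvementStates t) = i} | p.improvementStates t = S} :=
        card_eq_sum_card_fiberwise fun t ht =>
          mem_powersetCard.2 ⟨subset_univ _, (mem_filter.1 ht).2⟩
    _ ≤ ∑ S ∈ powersetCard i (univ : Finset (Fin n)), (k - 1) ^ i :=
        sum_le_sum fun S hS => (card_le_card (filter_subset_filter _ (subset_univ _))).trans <|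
          (p.card_filter_improvementStates_eq_le S).trans_eq (by rw [(mem_powersetCard.1 hS).2])
    _ = n.choose i * (k - 1) ^ i := by simp

theorem card_filter_card_improvementStates_le (d : ℕ) :
    #{t | #(p.improvementStates t) ≤ d} ≤ ∑ i ∈ range (d + 1), n.choose i * (k - 1) ^ i := by
  calc #{t | #(p.improvementStates t) ≤ d}
      = ∑ i ∈ range (d + 1),
          #{t ∈ {t | #(p.improvementStates t) ≤ d} | #(p.improvementStates t) = i} :=
        card_eq_sum_card_fiberwise fun t ht => mem_range_succ_iff.2 (mem_filter.1 ht).2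
    _ ≤ ∑ i ∈ range (d + 1), n.choose i * (k - 1) ^ i :=
        sum_le_sum fun i _ => (card_le_card (filter_subset_filter _ (subset_univ _))).trans <|
          p.card_filter_card_improvementStates_eq_le i

end

section

variable {n k r : ℕ} (p : PseudoPISeq n k (r + 1))

theorem sum_card_improvementStates_add_one_le :
    ∑ j : Fin r, (#(p.improvementStates (p.idx j.castSucc)) + 1) ≤ p.L := by
  have := add_sum_le_of_add_le_succ (fun j => (p.idx j : ℕ))
    (fun j => #(p.improvementStates (p.idx j.castSucc)) + 1) fun j => by
    have := p.jump j (Nat.succ_lt_succ j.2)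
    rw [ncard_improvementStates] at this
    exact (add_assoc _ _ _).symm.trans_le this
  have := (p.idx (Fin.last r)).2
  omega

theorem card_filter_card_improvementStates_idx_le (d : ℕ) :
    #{j : Fin r | #(p.improvementStates (p.idx j.castSucc)) ≤ d} ≤
      ∑ i ∈ range (d + 1), n.choose i * (k - 1) ^ i :=
  (card_le_card_of_injOn (fun j => p.idx j.castSucc) (fun j hj => by simpa using hj)
    (p.idx_mono.injective.comp (Fin.castSucc_injective r)).injOn).trans
    (p.card_filter_card_improvementStates_le d)

theorem card_filter_lt_card_improvementStates_idx_mul_le (d : ℕ) :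
    #{j : Fin r | d < #(p.improvementStates (p.idx j.castSucc))} * (d + 2) ≤ k ^ n :=
  calc #{j : Fin r | d < #(p.improvementStates (p.idx j.castSucc))} * (d + 2)
      = ∑ j : Fin r with d < #(p.improvementStates (p.idx j.castSucc)), (d + 2) := by
        rw [sum_const, smul_eq_mul]
    _ ≤ ∑ j : Fin r with d < #(p.improvementStates (p.idx j.castSucc)),
          (#(p.improvementStates (p.idx j.castSucc)) + 1) :=
        sum_le_sum fun j hj => Nat.succ_le_succ (mem_filter.1 hj).2
    _ ≤ ∑ j : Fin r, (#(p.improvementStates (p.idx j.castSucc)) + 1) :=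
        sum_le_sum_of_subset (filter_subset _ _)
    _ ≤ k ^ n := p.sum_card_improvementStates_add_one_le.trans p.L_le_pow

end

end PseudoPISeq

theorem pseudoPI_upper_bound (n k m : ℕ) (hn : 2 ≤ n) (hk : 2 ≤ k)
    (hpos : 0 < ((k : ℝ) - 1) / k * n - Real.sqrt (n * Real.log n))
    (p : PseudoPISeq n k m) :
    (m : ℝ) ≤ (k : ℝ) ^ n / (n : ℝ) ^ 2 +
      (k : ℝ) ^ n / (((k : ℝ) - 1) / k * n - Real.sqrt (n * Real.log n)) + 1 := by
  set D := ((k : ℝ) - 1) / k * n - Real.sqrt (n * Real.log n)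
  have hkn : (0 : ℝ) ≤ (k : ℝ) ^ n / (n : ℝ) ^ 2 := by positivity
  obtain _ | r := m
  · simpa using add_nonneg (add_nonneg hkn (div_nonneg (by positivity) hpos.le)) zero_le_one
  set d := ⌊D⌋₊
  set w := fun j : Fin r => #(p.improvementStates (p.idx j.castSucc))
  have hsmall : (#{j | w j ≤ d} : ℝ) ≤ (k : ℝ) ^ n / (n : ℝ) ^ 2 := by
    refine le_trans ?_ (sum_range_choose_mul_pow_le_div_sq n k d (by omega) (by omega)
      (by linarith [Nat.floor_le hpos.le]))
    have := p.card_filter_card_improvementStates_idx_le d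
    rw [← Nat.cast_le (α := ℝ)] at this
    push_cast [Nat.cast_sub (by omega : 1 ≤ k)] at this
    exact this
  have hbig : (#{j | d < w j} : ℝ) ≤ (k : ℝ) ^ n / D := by
    have := p.card_filter_lt_card_improvementStates_idx_mul_le d
    rw [← Nat.cast_le (α := ℝ)] at this
    push_cast at this
    rw [le_div_iff₀ hpos]
    nlinarith [Nat.lt_floor_add_one D]
  have hsplit : #{j | w j ≤ d} + #{j | d < w j} = r := by
    simpa only [not_le, card_univ, Fintype.card_fin] using
      card_filter_add_card_filter_not (s := univ) fun j => w j ≤ d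
  rw [← hsplit]
  push_cast
  linarith
end

section
/- Let n ≥ 1, k ≥ 1, and let σ_0, …, σ_{L−1} be policies (maps Fin n → Fin k) with an improvement-set assignment satisfying the non-inclusion property. Then for every subset S̄ ⊆ Fin n with |S̄| = d, the number of indices t with S_t = S̄ is at most (k−1)^d. -/
open Finset Polynomial Submodule

theorem same_improvement_states_bound (n k L : ℕ) (hn : 1 ≤ n) (hk : 1 ≤ k)
    (σ : Fin L → Fin n → Fin k) (T : Fin L → Set (Fin n × Fin k))
    (hT : ∀ t s, (s, σ t s) ∉ T t)
    (hni : ∀ t t' : Fin L, t < t' →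
      ∃ s, (∃ a, (s, a) ∈ T t) ∧ σ t s ≠ σ t' s ∧ (s, σ t s) ∉ T t')
    (Sbar : Finset (Fin n)) (d : ℕ) (hd : Sbar.card = d) :
    {t : Fin L | {s | ∃ a, (s, a) ∈ T t} = (Sbar : Set (Fin n))}.ncard ≤ (k - 1) ^ d := by
  classical
  have hset : {t : Fin L | {s | ∃ a, (s, a) ∈ T t} = (Sbar : Set (Fin n))} =
      ↑(Finset.univ.filter
        (fun t : Fin L => {s | ∃ a, (s, a) ∈ T t} = (Sbar : Set (Fin n)))) := by
    ext t; simp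
  rw [hset, Set.ncard_coe_finset]
  set A := Finset.univ.filter
    (fun t : Fin L => {s | ∃ a, (s, a) ∈ T t} = (Sbar : Set (Fin n))) with hA
  have hmemA : ∀ t ∈ A, ∀ s ∈ Sbar, ∃ a, (s, a) ∈ T t := by
    intro t ht s hs
    have h1 : {s | ∃ a, (s, a) ∈ T t} = (Sbar : Set (Fin n)) := (Finset.mem_filter.mp ht).2
    have : s ∈ {s | ∃ a, (s, a) ∈ T t} := h1 ▸ (by exact_mod_cast hs)
    exact this
  have hwit : ∀ t ∈ A, ∀ t' ∈ A, t < t' →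
      ∃ s ∈ Sbar, σ t s ≠ σ t' s ∧ (s, σ t s) ∉ T t' := by
    intro t ht t' _ hlt
    obtain ⟨s, hsa, hne, hnot⟩ := hni t t' hlt
    have h1 : {s | ∃ a, (s, a) ∈ T t} = (Sbar : Set (Fin n)) := (Finset.mem_filter.mp ht).2
    have hsS : s ∈ (Sbar : Set (Fin n)) := h1 ▸ hsa
    exact ⟨s, by exact_mod_cast hsS, hne, hnot⟩
  by_cases hk2 : 2 ≤ k
  · -- main case
    -- bad action sets
    set Bad : Fin L → Fin n → Finset (Fin k) :=
      fun t s => Finset.univ.filter (fun a => (s, a) ∉ T t ∧ a ≠ σ t s) with hBad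
    set q : Fin L → Fin n → Polynomial ℚ :=
      fun t s => ∏ a ∈ Bad t s, (Polynomial.X - Polynomial.C ((a : ℕ) : ℚ)) with hq
    have hdeg : ∀ t ∈ A, ∀ s ∈ Sbar, (q t s).natDegree < k - 1 := by
      intro t ht s hs
      obtain ⟨a₀, ha₀⟩ := hmemA t ht s hs
      have h1 : a₀ ≠ σ t s := fun h => hT t s (h ▸ ha₀)
      have hsub : Bad t s ⊆ Finset.univ \ {a₀, σ t s} := by
        intro a ha
        rw [hBad, Finset.mem_filter] at ha
        rw [Finset.mem_sdiff]
        refine ⟨Finset.mem_univ _, ?_⟩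
        intro hmem
        rcases Finset.mem_insert.mp hmem with h | h
        · exact ha.2.1 (h ▸ ha₀)
        · exact ha.2.2 (Finset.mem_singleton.mp h)
      have hcard : (Bad t s).card ≤ k - 2 := by
        have := Finset.card_le_card hsub
        rw [Finset.card_sdiff_of_subset (by simp), Finset.card_univ, Fintype.card_fin,
          Finset.card_pair h1] at this
        exact this
      have hdq : (q t s).natDegree = (Bad t s).card := by
        rw [hq]
        rw [Polynomial.natDegree_prod_of_monic _ _
          (fun a _ => Polynomial.monic_X_sub_C _)]
        calc ∑ x ∈ Bad t s, (Polynomial.X - Polynomial.C ((x : ℕ) : ℚ)).natDegree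
            = ∑ _x ∈ Bad t s, 1 :=
              Finset.sum_congr rfl (fun a _ => Polynomial.natDegree_X_sub_C _)
          _ = (Bad t s).card := by simp
      omega
    set p : Fin L → (Fin n → Fin k) → ℚ :=
      fun t g => ∏ s ∈ Sbar, (q t s).eval ((g s : ℕ) : ℚ) with hp
    have heval : ∀ t s (x : ℚ), (q t s).eval x =
        ∏ a ∈ Bad t s, (x - ((a : ℕ) : ℚ)) := by
      intro t s x
      rw [hq]
      simp [Polynomial.eval_prod]
    have htri : ∀ t ∈ A, ∀ t' ∈ A, t < t' → p t' (σ t) = 0 := by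
      intro t ht t' ht' hlt
      obtain ⟨s, hs, hne, hnot⟩ := hwit t ht t' ht' hlt
      rw [hp]
      refine Finset.prod_eq_zero hs ?_
      rw [heval]
      refine Finset.prod_eq_zero (i := σ t s) ?_ (by ring)
      rw [hBad, Finset.mem_filter]
      exact ⟨Finset.mem_univ _, hnot, hne⟩
    have hdiag : ∀ t, p t (σ t) ≠ 0 := by
      intro t
      rw [hp]
      rw [Finset.prod_ne_zero_iff]
      intro s _
      rw [heval, Finset.prod_ne_zero_iff]
      intro a ha
      have hane : a ≠ σ t s := by
        rw [hBad, Finset.mem_filter] at ha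
        exact ha.2.2
      intro hzero
      apply hane
      have : ((a : ℕ) : ℚ) = ((σ t s : ℕ) : ℚ) := by
        have := sub_eq_zero.mp hzero
        linarith
      exact Fin.val_injective (Nat.cast_injective this)
    set e : ((↥Sbar → Fin (k - 1))) → ((Fin n → Fin k) → ℚ) :=
      fun μ g => ∏ i : ↥Sbar, ((g ↑i : ℕ) : ℚ) ^ ((μ i : ℕ)) with he
    set W := Submodule.span ℚ (Set.range e) with hW
    have hmemW : ∀ t ∈ A, p t ∈ W := by
      intro t ht
      have hrep : p t = ∑ μ : ↥Sbar → Fin (k - 1),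
          (∏ i : ↥Sbar, (q t ↑i).coeff (μ i)) • e μ := by
        funext g
        rw [Finset.sum_apply]
        simp only [Pi.smul_apply, smul_eq_mul, he]
        rw [hp]
        calc ∏ s ∈ Sbar, (q t s).eval ((g s : ℕ) : ℚ)
            = ∏ i : ↥Sbar, (q t ↑i).eval ((g ↑i : ℕ) : ℚ) :=
              (Finset.prod_coe_sort Sbar (fun s => (q t s).eval ((g s : ℕ) : ℚ))).symm
          _ = ∏ i : ↥Sbar, ∑ j : Fin (k - 1),
                (q t ↑i).coeff (j : ℕ) * ((g ↑i : ℕ) : ℚ) ^ (j : ℕ) := by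
              refine Finset.prod_congr rfl ?_
              intro i _
              rw [Polynomial.eval_eq_sum_range' (hdeg t ht ↑i i.2), Finset.sum_range]
          _ = ∑ μ ∈ Fintype.piFinset (fun _ : ↥Sbar => (Finset.univ : Finset (Fin (k - 1)))),
                ∏ i : ↥Sbar, (q t ↑i).coeff ((μ i : ℕ)) * ((g ↑i : ℕ) : ℚ) ^ ((μ i : ℕ)) := by
              rw [Finset.prod_univ_sum]
          _ = ∑ μ : ↥Sbar → Fin (k - 1),
                (∏ i : ↥Sbar, (q t ↑i).coeff (μ i)) *
                  ∏ i : ↥Sbar, ((g ↑i : ℕ) : ℚ) ^ ((μ i : ℕ)) := by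
              rw [Fintype.piFinset_univ]
              refine Finset.sum_congr rfl ?_
              intro μ _
              rw [Finset.prod_mul_distrib]
      rw [hrep]
      exact Submodule.sum_mem _ (fun μ _ =>
        Submodule.smul_mem _ _ (Submodule.subset_span ⟨μ, rfl⟩))
    have hli : LinearIndependent ℚ (fun t : ↥A => p ↑t) := by
      rw [linearIndependent_iff']
      intro s g hsum i his
      by_contra hgi
      set s' := s.filter (fun j => g j ≠ 0) with hs'
      have hne : s'.Nonempty := ⟨i, by simp [hs', his, hgi]⟩
      set i₀ := s'.min' hne with hi₀
      have hi₀s' : i₀ ∈ s' := s'.min'_mem hne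
      have hi₀s : i₀ ∈ s := (Finset.mem_filter.mp hi₀s').1
      have hg₀ : g i₀ ≠ 0 := (Finset.mem_filter.mp hi₀s').2
      have hev : ∑ j ∈ s, g j * p (↑j) (σ ↑i₀) = 0 := by
        have := congrFun hsum (σ ↑i₀)
        rw [Finset.sum_apply] at this
        simpa using this
      have hsingle : ∑ j ∈ s, g j * p (↑j) (σ ↑i₀) = g i₀ * p (↑i₀) (σ ↑i₀) := by
        refine Finset.sum_eq_single i₀ ?_ (fun h => absurd hi₀s h)
        intro b hb hbne
        by_cases hgb : g b = 0
        · rw [hgb, zero_mul]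
        · have hbs' : b ∈ s' := Finset.mem_filter.mpr ⟨hb, hgb⟩
          have hlt : i₀ < b := lt_of_le_of_ne (s'.min'_le b hbs') (Ne.symm hbne)
          have hlt' : (↑i₀ : Fin L) < ↑b := hlt
          rw [htri ↑i₀ i₀.2 ↑b b.2 hlt', mul_zero]
      rw [hsingle] at hev
      exact hg₀ ((mul_eq_zero.mp hev).resolve_right (hdiag ↑i₀))
    haveI : FiniteDimensional ℚ W := FiniteDimensional.span_of_finite ℚ (Set.finite_range e)
    have hfr : Module.finrank ℚ W ≤ (k - 1) ^ d := by
      have h1 := finrank_range_le_card (R := ℚ) e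
      have h2 : Fintype.card (↥Sbar → Fin (k - 1)) = (k - 1) ^ d := by
        rw [Fintype.card_fun]
        simp [Fintype.card_coe, hd]
      rw [h2] at h1
      exact h1
    have hcard : A.card ≤ Module.finrank ℚ W := by
      rw [← Fintype.card_coe]
      have hli' : LinearIndependent ℚ
          (fun t : ↥A => (⟨p ↑t, hmemW ↑t t.2⟩ : W)) := by
        apply LinearIndependent.of_comp W.subtype
        exact hli
      exact hli'.fintype_card_le_finrank
    exact le_trans hcard hfr
  · -- k = 1
    have hk1 : k = 1 := by omega
    subst hk1
    rcases Nat.eq_zero_or_pos d with hd0 | hdpos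
    · subst hd0
      simp only [pow_zero]
      refine Finset.card_le_one.mpr ?_
      intro a ha b hb
      by_contra hne
      have hSe : Sbar = ∅ := Finset.card_eq_zero.mp hd
      rcases lt_or_gt_of_ne hne with h | h
      · obtain ⟨s, hs, -, -⟩ := hwit a ha b hb h
        simp [hSe] at hs
      · obtain ⟨s, hs, -, -⟩ := hwit b hb a ha h
        simp [hSe] at hs
    · have hAe : A = ∅ := by
        rw [Finset.eq_empty_iff_forall_notMem]
        intro t ht
        have hSne : Sbar.Nonempty := Finset.card_pos.mp (hd ▸ hdpos)
        obtain ⟨s, hs⟩ := hSne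
        obtain ⟨a, ha⟩ := hmemA t ht s hs
        have : a = σ t s := Subsingleton.elim a (σ t s)
        exact hT t s (this ▸ ha)
      simp [hAe]
end

section
/- Let d ≥ 1, k ≥ 1 and K ∈ ℕ, and for i = 1, …, K let π^i, T^i : Fin d → Fin k be maps with T^i(s) ≠ π^i(s) for all s. Assume that for all i < j and every subset U ⊆ Fin d, π^i is not equal to the map sending s to T^j(s) if s ∈ U and to π^j(s) otherwise. Let e_1, …, e_k denote the standard basis of ℝ^k. Then the family of vectors w_i = ⊗_{s ∈ Fin d} (e_{π^i(s)} − e_{T^i(s)}), i = 1, …, K, in the tensor product ⨂_{s ∈ Fin d} ℝ^k (PiTensorProduct over ℝ of d copies of ℝ^k) is linearly independent over ℝ. -/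
open scoped TensorProduct

noncomputable def coordFun (d k : ℕ) (g : Fin d → Fin k) :
    (⨂[ℝ] _ : Fin d, (Fin k → ℝ)) →ₗ[ℝ] ℝ :=
  PiTensorProduct.lift ((MultilinearMap.mkPiAlgebra ℝ (Fin d) ℝ).compLinearMap
    (fun s => LinearMap.proj (g s)))

open Classical in
theorem tensor_linear_independent (d k K : ℕ) (hd : 1 ≤ d) (hk : 1 ≤ k)
    (π T : Fin K → Fin d → Fin k)
    (hT : ∀ i s, T i s ≠ π i s)
    (hnc : ∀ i j : Fin K, i < j → ∀ U : Set (Fin d),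
      π i ≠ fun s => if s ∈ U then T j s else π j s) :
    LinearIndependent ℝ (fun i : Fin K =>
      PiTensorProduct.tprod ℝ
        (fun s : Fin d => (Pi.single (π i s) 1 - Pi.single (T i s) 1 : Fin k → ℝ))) := by
  rw [Fintype.linearIndependent_iff]
  intro c hc
  have key : ∀ i : Fin K, (∀ j : Fin K, j < i → c j = 0) → c i = 0 := by
    intro i ih
    have val : ∀ j : Fin K, coordFun d k (π i)
        (PiTensorProduct.tprod ℝ
          (fun s : Fin d => (Pi.single (π j s) 1 - Pi.single (T j s) 1 : Fin k → ℝ)))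
        = ∏ s : Fin d,
            ((if π i s = π j s then (1:ℝ) else 0) - (if π i s = T j s then 1 else 0)) := by
      intro j
      simp only [coordFun, PiTensorProduct.lift.tprod, MultilinearMap.compLinearMap_apply,
        MultilinearMap.mkPiAlgebra_apply, LinearMap.proj_apply, Pi.sub_apply, Pi.single_apply]
    have h0 := congrArg (coordFun d k (π i)) hc
    rw [map_sum, map_zero] at h0
    simp only [map_smul, val, smul_eq_mul] at h0
    rw [Finset.sum_eq_single i] at h0
    · have hprod : ∏ s : Fin d,
          ((if π i s = π i s then (1:ℝ) else 0) - (if π i s = T i s then 1 else 0)) = 1 := by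
        apply Finset.prod_eq_one
        intro s _
        have h1 : π i s ≠ T i s := fun h => hT i s h.symm
        simp [h1]
      rw [hprod, mul_one] at h0
      exact h0
    · intro j _ hji
      rcases lt_or_gt_of_ne hji with hlt | hgt
      · rw [ih j hlt, zero_mul]
      · have hj0 : ∏ s : Fin d,
            ((if π i s = π j s then (1:ℝ) else 0) - (if π i s = T j s then 1 else 0)) = 0 := by
          by_contra h
          replace h := Finset.prod_ne_zero_iff.mp h
          apply hnc i j hgt {s | π i s = T j s}
          funext s
          have hs := h s (Finset.mem_univ s)
          by_cases hU : π i s = T j s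
          · simp [Set.mem_setOf_eq, hU]
          · simp only [hU, if_false, sub_zero] at hs
            have hpp : π i s = π j s := by
              by_contra hne
              simp [hne] at hs
            simp only [Set.mem_setOf_eq]
            rw [if_neg hU]
            exact hpp
        rw [hj0, mul_zero]
    · intro h; exact absurd (Finset.mem_univ i) h
  have main : ∀ n : ℕ, ∀ i : Fin K, (i : ℕ) ≤ n → c i = 0 := by
    intro n
    induction n with
    | zero =>
      intro i hi
      exact key i (fun j hj => absurd (lt_of_lt_of_le (Fin.lt_def.mp hj) hi) (Nat.not_lt_zero _))
    | succ n IH =>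
      intro i hi
      exact key i (fun j hj => IH j (Nat.lt_succ_iff.mp (lt_of_lt_of_le (Fin.lt_def.mp hj) hi)))
  exact fun i => main i i le_rfl
end

section
/- Let (σ_0, …, σ_{L−1}; (T_t); t_0 < … < t_{m−1}) be a pseudo-PI-sequence with n states and k actions (n, k ≥ 1). Then for every integer M ≥ 1, the number K of indices j < m−1 with |S_{t_j}| ≥ M satisfies K·(M+1) ≤ k^n − 1. (Note that the non-inclusion property forces the policies σ_t to be pairwise distinct, so L ≤ k^n.) -/
theorem large_improvement_sets_bound (n k m : ℕ) (hn : 1 ≤ n) (hk : 1 ≤ k)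
    (p : PseudoPISeq n k m) (M : ℕ) (hM : 1 ≤ M) :
    {j : Fin m | (j : ℕ) < m - 1 ∧
        M ≤ {s | ∃ a, (s, a) ∈ p.T (p.idx j)}.ncard}.ncard * (M + 1) ≤ k ^ n - 1 := by
  classical
  -- policies are pairwise distinct, so L ≤ k^n
  have hinj : Function.Injective p.σ := by
    intro t t' h
    by_contra hne
    rcases lt_or_gt_of_ne hne with hlt | hlt
    · obtain ⟨s, _, hs, _⟩ := p.nonincl t t' hlt
      exact hs (by rw [h])
    · obtain ⟨s, _, hs, _⟩ := p.nonincl t' t hlt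
      exact hs (by rw [h])
  have hL : p.L ≤ k ^ n := by
    have := Fintype.card_le_of_injective p.σ hinj
    simpa using this
  rcases Nat.eq_zero_or_pos m with hm | hm
  · subst hm
    have : {j : Fin 0 | (j : ℕ) < 0 - 1 ∧
        M ≤ {s | ∃ a, (s, a) ∈ p.T (p.idx j)}.ncard} = ∅ := by
      ext j; exact absurd j.isLt (Nat.not_lt_zero _)
    simp [this]
  -- finset version of the set of large indices
  set P : Fin m → Prop := fun j => (j : ℕ) < m - 1 ∧
      M ≤ {s | ∃ a, (s, a) ∈ p.T (p.idx j)}.ncard with hP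
  have hset : {j : Fin m | P j}.ncard = (Finset.univ.filter P).card := by
    rw [← Set.ncard_coe_finset]
    congr 1
    ext j; simp
  rw [hset]
  -- main induction: for each i < m, # of large indices below i times (M+1) ≤ idx i
  have key : ∀ i : ℕ, ∀ hi : i < m,
      ((Finset.univ.filter (fun j : Fin m => P j ∧ (j : ℕ) < i)).card) * (M + 1)
        ≤ (p.idx ⟨i, hi⟩ : ℕ) := by
    intro i
    induction i with
    | zero =>
      intro hi
      have : (Finset.univ.filter (fun j : Fin m => P j ∧ (j : ℕ) < 0)) = ∅ := by
        ext j; simp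
      simp [this]
    | succ i ih =>
      intro hi
      have hi' : i < m := Nat.lt_of_succ_lt hi
      by_cases hPi : P ⟨i, hi'⟩
      · have hcard : (Finset.univ.filter (fun j : Fin m => P j ∧ (j : ℕ) < i + 1)).card
            = (Finset.univ.filter (fun j : Fin m => P j ∧ (j : ℕ) < i)).card + 1 := by
          have : (Finset.univ.filter (fun j : Fin m => P j ∧ (j : ℕ) < i + 1))
              = insert ⟨i, hi'⟩ (Finset.univ.filter (fun j : Fin m => P j ∧ (j : ℕ) < i)) := by
            ext j
            simp only [Finset.mem_filter, Finset.mem_insert, Finset.mem_univ, true_and]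
            constructor
            · rintro ⟨hpj, hji⟩
              rcases Nat.lt_succ_iff_lt_or_eq.mp hji with h | h
              · exact Or.inr ⟨hpj, h⟩
              · exact Or.inl (Fin.ext h)
            · rintro (rfl | ⟨hpj, hji⟩)
              · exact ⟨hPi, Nat.lt_succ_self _⟩
              · exact ⟨hpj, Nat.lt_succ_of_lt hji⟩
          rw [this, Finset.card_insert_of_notMem (by simp)]
        have hjump := p.jump i hi
        have hM' : M ≤ {s | ∃ a, (s, a) ∈ p.T (p.idx ⟨i, hi'⟩)}.ncard := hPi.2
        calc (Finset.univ.filter (fun j : Fin m => P j ∧ (j : ℕ) < i + 1)).card * (M + 1)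
            = (Finset.univ.filter (fun j : Fin m => P j ∧ (j : ℕ) < i)).card * (M + 1)
              + (M + 1) := by rw [hcard]; ring
          _ ≤ (p.idx ⟨i, hi'⟩ : ℕ) + (M + 1) := by
              exact Nat.add_le_add_right (ih hi') _
          _ ≤ (p.idx ⟨i, hi'⟩ : ℕ)
              + {s | ∃ a, (s, a) ∈ p.T (p.idx ⟨i, hi'⟩)}.ncard + 1 := by omega
          _ ≤ (p.idx ⟨i + 1, hi⟩ : ℕ) := hjump
      · have hsub : (Finset.univ.filter (fun j : Fin m => P j ∧ (j : ℕ) < i + 1))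
            ⊆ (Finset.univ.filter (fun j : Fin m => P j ∧ (j : ℕ) < i)) := by
          intro j hj
          simp only [Finset.mem_filter, Finset.mem_univ, true_and] at hj ⊢
          refine ⟨hj.1, ?_⟩
          rcases Nat.lt_succ_iff_lt_or_eq.mp hj.2 with h | h
          · exact h
          · exact absurd hj.1 (by rwa [show j = ⟨i, hi'⟩ from Fin.ext h])
        have hmono : (p.idx ⟨i, hi'⟩ : ℕ) ≤ (p.idx ⟨i + 1, hi⟩ : ℕ) :=
          le_of_lt (p.idx_mono (by exact Fin.mk_lt_mk.mpr (Nat.lt_succ_self i)))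
        calc (Finset.univ.filter (fun j : Fin m => P j ∧ (j : ℕ) < i + 1)).card * (M + 1)
            ≤ (Finset.univ.filter (fun j : Fin m => P j ∧ (j : ℕ) < i)).card * (M + 1) :=
              Nat.mul_le_mul_right _ (Finset.card_le_card hsub)
          _ ≤ (p.idx ⟨i, hi'⟩ : ℕ) := ih hi'
          _ ≤ _ := hmono
  have hlast : m - 1 < m := Nat.sub_lt hm Nat.one_pos
  have hfull : (Finset.univ.filter P)
      = (Finset.univ.filter (fun j : Fin m => P j ∧ (j : ℕ) < m - 1)) := by
    ext j
    simp only [Finset.mem_filter, Finset.mem_univ, true_and]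
    exact ⟨fun h => ⟨h, h.1⟩, fun h => h.1⟩
  rw [hfull]
  calc (Finset.univ.filter (fun j : Fin m => P j ∧ (j : ℕ) < m - 1)).card * (M + 1)
      ≤ (p.idx ⟨m - 1, hlast⟩ : ℕ) := key (m - 1) hlast
    _ ≤ p.L - 1 := Nat.le_sub_one_of_lt (p.idx ⟨m - 1, hlast⟩).isLt
    _ ≤ k ^ n - 1 := Nat.sub_le_sub_right hL 1
end

section
/- In a discounted MDP, for any two policies with π ≺ π', there exists a state s ∈ S^π such that π(s) ≠ π'(s) and (s, π(s)) ∉ T^{π'}. -/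
/-!
Write `A^π(s, a) = r(s, a) + γ ∑ₜ P(s, a, t) v^π(t) - v^π(s)` for the advantage of `a` at `s`
over `π`. For `σ = π ⊕ {(s, a)}` the gap `v^σ - v^π` solves `d = A^π(s, a) eₛ + γ P^σ d`, and a
maximum principle for such equations shows that `(s, a) ∈ T^π` exactly when `A^π(s, a) > 0`.
Given `π ≺ π'`, pick a state `s` where `d = v^{π'} - v^π` is maximal, so `d(s) > 0`. Both
`A^π(s, π'(s))` and `-A^{π'}(s, π(s))` equal `d(s) - γ ∑ₜ P(s, b, t) d(t) ≥ (1 - γ) d(s) > 0` for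
the corresponding action `b`, so `s ∈ S^π` and `(s, π(s)) ∉ T^{π'}`; since `A^{π'}(s, π'(s)) = 0`,
also `π(s) ≠ π'(s)`.
-/

/-- The transition matrix induced by a policy. -/
noncomputable def polMatrix {n k : ℕ} (P : Fin n → Fin k → Fin n → ℝ)
    (π : Fin n → Fin k) : Matrix (Fin n) (Fin n) ℝ :=
  Matrix.of fun s s' => P s (π s) s'

/-- The reward vector induced by a policy. -/
noncomputable def polReward {n k : ℕ} (r : Fin n → Fin k → ℝ)
    (π : Fin n → Fin k) : Fin n → ℝ :=
  fun s => r s (π s)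

/-- The value vector of a policy: `v^π = ∑_{i=0}^∞ γ^i (P^π)^i r^π`. -/
noncomputable def polValue {n k : ℕ} (P : Fin n → Fin k → Fin n → ℝ)
    (r : Fin n → Fin k → ℝ) (γ : ℝ) (π : Fin n → Fin k) : Fin n → ℝ :=
  ∑' i : ℕ, γ ^ i • (polMatrix P π ^ i).mulVec (polReward r π)

/-- `π ⪯ π'` : the policy `π'` dominates `π`. -/
def Dominates {n k : ℕ} (P : Fin n → Fin k → Fin n → ℝ) (r : Fin n → Fin k → ℝ)
    (γ : ℝ) (π π' : Fin n → Fin k) : Prop :=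
  ∀ s, polValue P r γ π s ≤ polValue P r γ π' s

/-- `π ≺ π'` : the policy `π'` strictly dominates `π`. -/
def StrictDominates {n k : ℕ} (P : Fin n → Fin k → Fin n → ℝ) (r : Fin n → Fin k → ℝ)
    (γ : ℝ) (π π' : Fin n → Fin k) : Prop :=
  Dominates P r γ π π' ∧ ∃ s, polValue P r γ π s < polValue P r γ π' s

/-- A set of state-action pairs is well-defined if it contains each state at most once. -/
def WellDefined {n k : ℕ} (U : Set (Fin n × Fin k)) : Prop :=
  ∀ s a a', (s, a) ∈ U → (s, a') ∈ U → a = a'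

-- `π ⊕ U` : the policy obtained from `π` by switching the action at `s` to `a`
-- for each `(s, a) ∈ U` (intended for well-defined `U`).
open Classical in
noncomputable def switch {n k : ℕ} (π : Fin n → Fin k) (U : Set (Fin n × Fin k)) :
    Fin n → Fin k :=
  fun s => if h : ∃ a, (s, a) ∈ U then h.choose else π s

/-- The improvement set `T^π = {(s,a) : π ⊕ {(s,a)} ≻ π}`. -/
def improvementSet {n k : ℕ} (P : Fin n → Fin k → Fin n → ℝ) (r : Fin n → Fin k → ℝ)
    (γ : ℝ) (π : Fin n → Fin k) : Set (Fin n × Fin k) :=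
  {p | StrictDominates P r γ π (Function.update π p.1 p.2)}

/-- The set of improvement states `S^π`. -/
def improvementStates {n k : ℕ} (P : Fin n → Fin k → Fin n → ℝ) (r : Fin n → Fin k → ℝ)
    (γ : ℝ) (π : Fin n → Fin k) : Set (Fin n) :=
  {s | ∃ a, (s, a) ∈ improvementSet P r γ π}

open Finset Matrix

section RowStochastic

variable {ι : Type*} [Fintype ι]

theorem sum_mul_le_of_le {p x : ι → ℝ} {c : ℝ} (hp0 : ∀ i, 0 ≤ p i) (hp1 : ∑ i, p i = 1)
    (hx : ∀ i, x i ≤ c) : ∑ i, p i * x i ≤ c :=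
  calc ∑ i, p i * x i ≤ ∑ i, p i * c :=
        sum_le_sum fun i _ => mul_le_mul_of_nonneg_left (hx i) (hp0 i)
    _ = c := by rw [← sum_mul, hp1, one_mul]

variable [DecidableEq ι] {M : Matrix ι ι ℝ}

theorem mulVec_apply_le_of_mem_rowStochastic (hM : M ∈ rowStochastic ℝ ι) {x : ι → ℝ} {c : ℝ}
    (hx : ∀ i, x i ≤ c) (i : ι) : (M *ᵥ x) i ≤ c :=
  sum_mul_le_of_le (fun _ => nonneg_of_mem_rowStochastic hM) (sum_row_of_mem_rowStochastic hM i) hx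

theorem norm_mulVec_le_of_mem_rowStochastic (hM : M ∈ rowStochastic ℝ ι) (x : ι → ℝ) :
    ‖M *ᵥ x‖ ≤ ‖x‖ := by
  refine (pi_norm_le_iff_of_nonneg (norm_nonneg x)).2 fun i => ?_
  calc ‖(M *ᵥ x) i‖ ≤ ∑ j, ‖M i j * x j‖ := norm_sum_le _ _
    _ = ∑ j, M i j * ‖x j‖ := by
        simp only [norm_mul, Real.norm_of_nonneg (nonneg_of_mem_rowStochastic hM)]
    _ ≤ ‖x‖ := sum_mul_le_of_le (fun _ => nonneg_of_mem_rowStochastic hM)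
        (sum_row_of_mem_rowStochastic hM i) (norm_le_pi_norm x)

variable {γ : ℝ}

theorem summable_pow_smul_mulVec (hM : M ∈ rowStochastic ℝ ι) (hγ0 : 0 ≤ γ) (hγ1 : γ < 1)
    (w : ι → ℝ) : Summable fun i : ℕ => γ ^ i • (M ^ i *ᵥ w) := by
  refine Summable.of_norm_bounded ((summable_geometric_of_lt_one hγ0 hγ1).mul_left ‖w‖)
    fun i => ?_
  rw [norm_smul, Real.norm_of_nonneg (pow_nonneg hγ0 i), mul_comm]
  exact mul_le_mul_of_nonneg_right
    (norm_mulVec_le_of_mem_rowStochastic (pow_mem hM i) w) (pow_nonneg hγ0 i)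

theorem tsum_pow_smul_mulVec_eq (hM : M ∈ rowStochastic ℝ ι) (hγ0 : 0 ≤ γ) (hγ1 : γ < 1)
    (w : ι → ℝ) :
    ∑' i : ℕ, γ ^ i • (M ^ i *ᵥ w) = w + γ • M *ᵥ ∑' i : ℕ, γ ^ i • (M ^ i *ᵥ w) := by
  set f : ℕ → ι → ℝ := fun i => γ ^ i • (M ^ i *ᵥ w)
  have hf : HasSum f (∑' i, f i) := (summable_pow_smul_mulVec hM hγ0 hγ1 w).hasSum
  have hstep : ∀ i, f (i + 1) = γ • M *ᵥ f i := fun i => by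
    simp only [f, pow_succ', ← mulVec_mulVec, mulVec_smul, smul_smul]
  have hshift : HasSum (fun i => f (i + 1)) (∑' i, f i - f 0) := by
    simpa only [sum_range_one] using (hasSum_nat_add_iff' 1).2 hf
  have hmap : HasSum (fun i => γ • M *ᵥ f i) (γ • M *ᵥ ∑' i, f i) :=
    hf.map (γ • M.mulVecLin) (γ • M.mulVecLin).continuous_of_finiteDimensional
  rw [funext hstep] at hshift
  have hfix := hshift.unique hmap
  simp only [f, pow_zero, one_smul, one_mulVec] at hfix
  rw [← hfix]
  abel

theorem nonpos_of_eq_add_smul_mulVec (hM : M ∈ rowStochastic ℝ ι) (hγ0 : 0 ≤ γ) (hγ1 : γ < 1)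
    {w x : ι → ℝ} (hx : x = w + γ • M *ᵥ x) (hw : w ≤ 0) : x ≤ 0 := by
  intro i
  have : Nonempty ι := ⟨i⟩
  obtain ⟨j, hj⟩ := Finite.exists_max x
  have hxj : x j = w j + γ * (M *ᵥ x) j := congrFun hx j
  have hMx : γ * (M *ᵥ x) j ≤ γ * x j :=
    mul_le_mul_of_nonneg_left (mulVec_apply_le_of_mem_rowStochastic hM hj j) hγ0
  have hwj : w j ≤ 0 := hw j
  have : (1 - γ) * x j ≤ 0 := by linarith
  exact (hj i).trans (nonpos_of_mul_nonpos_right this (sub_pos.2 hγ1))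

theorem le_of_eq_add_smul_mulVec (hM : M ∈ rowStochastic ℝ ι) (hγ0 : 0 ≤ γ) (hγ1 : γ < 1)
    {w x : ι → ℝ} (hx : x = w + γ • M *ᵥ x) (hw : 0 ≤ w) : w ≤ x := by
  have hx0 : 0 ≤ x := by
    have := nonpos_of_eq_add_smul_mulVec hM hγ0 hγ1 (w := -w) (x := -x)
      (by rw [mulVec_neg, smul_neg, ← neg_add, ← hx]) (neg_nonpos.2 hw)
    exact neg_nonpos.1 this
  intro i
  have := mul_nonneg hγ0 (nonneg_mulVec_of_mem_rowStochastic hM hx0 i)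
  have hxi : x i = w i + γ * (M *ᵥ x) i := congrFun hx i
  linarith

end RowStochastic

section MDP

variable {n k : ℕ} (P : Fin n → Fin k → Fin n → ℝ) (r : Fin n → Fin k → ℝ) {γ : ℝ}

theorem polMatrix_mem_rowStochastic (hP0 : ∀ s a s', 0 ≤ P s a s')
    (hP1 : ∀ s a, ∑ s', P s a s' = 1) (π : Fin n → Fin k) :
    polMatrix P π ∈ rowStochastic ℝ (Fin n) :=
  mem_rowStochastic_iff_sum.2 ⟨fun s t => hP0 s (π s) t, fun s => hP1 s (π s)⟩

theorem polValue_eq_add (hP0 : ∀ s a s', 0 ≤ P s a s') (hP1 : ∀ s a, ∑ s', P s a s' = 1)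
    (hγ0 : 0 ≤ γ) (hγ1 : γ < 1) (π : Fin n → Fin k) :
    polValue P r γ π = polReward r π + γ • polMatrix P π *ᵥ polValue P r γ π :=
  tsum_pow_smul_mulVec_eq (polMatrix_mem_rowStochastic P hP0 hP1 π) hγ0 hγ1 _

theorem polValue_apply_eq (hP0 : ∀ s a s', 0 ≤ P s a s') (hP1 : ∀ s a, ∑ s', P s a s' = 1)
    (hγ0 : 0 ≤ γ) (hγ1 : γ < 1) (π : Fin n → Fin k) (s : Fin n) :
    polValue P r γ π s = r s (π s) + γ * ∑ t, P s (π s) t * polValue P r γ π t :=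
  congrFun (polValue_eq_add P r hP0 hP1 hγ0 hγ1 π) s

noncomputable def advantage (γ : ℝ) (π : Fin n → Fin k) (s : Fin n) (a : Fin k) : ℝ :=
  r s a + γ * ∑ t, P s a t * polValue P r γ π t - polValue P r γ π s

theorem advantage_self (hP0 : ∀ s a s', 0 ≤ P s a s') (hP1 : ∀ s a, ∑ s', P s a s' = 1)
    (hγ0 : 0 ≤ γ) (hγ1 : γ < 1) (π : Fin n → Fin k) (s : Fin n) :
    advantage P r γ π s (π s) = 0 := by
  rw [advantage, ← polValue_apply_eq P r hP0 hP1 hγ0 hγ1, sub_self]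

variable (γ) in
theorem advantage_sub_advantage (π π' : Fin n → Fin k) (s : Fin n) (a : Fin k) :
    advantage P r γ π s a - advantage P r γ π' s a =
      (polValue P r γ π' s - polValue P r γ π s) -
        γ * ∑ t, P s a t * (polValue P r γ π' t - polValue P r γ π t) := by
  simp only [advantage, mul_sub, sum_sub_distrib]
  ring

theorem polValue_update_sub_eq (hP0 : ∀ s a s', 0 ≤ P s a s') (hP1 : ∀ s a, ∑ s', P s a s' = 1)
    (hγ0 : 0 ≤ γ) (hγ1 : γ < 1) (π : Fin n → Fin k) (s : Fin n) (a : Fin k) :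
    polValue P r γ (Function.update π s a) - polValue P r γ π =
      Pi.single s (advantage P r γ π s a) + γ • polMatrix P (Function.update π s a) *ᵥ
        (polValue P r γ (Function.update π s a) - polValue P r γ π) := by
  set σ := Function.update π s a
  have hw : polReward r σ + γ • polMatrix P σ *ᵥ polValue P r γ π - polValue P r γ π =
      Pi.single s (advantage P r γ π s a) := by
    funext t
    rcases eq_or_ne t s with rfl | hts
    · simp [σ, advantage, polReward, polMatrix, mulVec, dotProduct]
    · have hσt : σ t = π t := Function.update_of_ne hts a π
      simp only [Pi.sub_apply, Pi.add_apply, Pi.smul_apply, smul_eq_mul, Pi.single_apply, hts,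
        if_false, polReward, hσt]
      rw [polValue_apply_eq P r hP0 hP1 hγ0 hγ1 π t]
      simp [polMatrix, mulVec, dotProduct, hσt]
  rw [mulVec_sub, smul_sub, ← hw]
  nth_rewrite 1 [polValue_eq_add P r hP0 hP1 hγ0 hγ1 σ]
  abel

theorem mem_improvementSet_iff (hP0 : ∀ s a s', 0 ≤ P s a s') (hP1 : ∀ s a, ∑ s', P s a s' = 1)
    (hγ0 : 0 ≤ γ) (hγ1 : γ < 1) (π : Fin n → Fin k) (s : Fin n) (a : Fin k) :
    (s, a) ∈ improvementSet P r γ π ↔ 0 < advantage P r γ π s a := by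
  have hd := polValue_update_sub_eq P r hP0 hP1 hγ0 hγ1 π s a
  have hM := polMatrix_mem_rowStochastic P hP0 hP1 (Function.update π s a)
  simp only [improvementSet, StrictDominates, Dominates, Set.mem_ofPred_eq]
  constructor
  · rintro ⟨-, t, ht⟩
    by_contra! h
    have := nonpos_of_eq_add_smul_mulVec hM hγ0 hγ1 hd (Pi.single_nonpos.2 h) t
    simp only [Pi.sub_apply, Pi.zero_apply] at this
    linarith
  · intro h
    have hsingle : (0 : Fin n → ℝ) ≤ Pi.single s (advantage P r γ π s a) := Pi.single_nonneg.2 h.le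
    have hle := le_of_eq_add_smul_mulVec hM hγ0 hγ1 hd hsingle
    refine ⟨fun t => ?_, s, ?_⟩
    · have := (hsingle t).trans (hle t)
      simp only [Pi.sub_apply, Pi.zero_apply] at this
      linarith
    · have := hle s
      simp only [Pi.sub_apply, Pi.single_eq_same] at this
      linarith

end MDP

theorem noninclusion_property_general (n k : ℕ)
    (P : Fin n → Fin k → Fin n → ℝ) (r : Fin n → Fin k → ℝ) (γ : ℝ)
    (hP0 : ∀ s a s', 0 ≤ P s a s') (hP1 : ∀ s a, ∑ s', P s a s' = 1)
    (hγ0 : 0 ≤ γ) (hγ1 : γ < 1)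
    (π π' : Fin n → Fin k) (hlt : StrictDominates P r γ π π') :
    ∃ s ∈ improvementStates P r γ π,
      π s ≠ π' s ∧ (s, π s) ∉ improvementSet P r γ π' := by
  obtain ⟨-, t₀, ht₀⟩ := hlt
  set d : Fin n → ℝ := fun t => polValue P r γ π' t - polValue P r γ π t
  have : Nonempty (Fin n) := ⟨t₀⟩
  obtain ⟨s, hs⟩ := Finite.exists_max d
  have hds : 0 < d s := (sub_pos.2 ht₀).trans_le (hs t₀)
  have hgap : ∀ b, 0 < d s - γ * ∑ t, P s b t * d t := fun b => by
    have := mul_le_mul_of_nonneg_left (sum_mul_le_of_le (hP0 s b) (hP1 s b) hs) hγ0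
    nlinarith
  have hπ : 0 < advantage P r γ π s (π' s) := by
    linarith [advantage_sub_advantage P r γ π π' s (π' s),
      advantage_self P r hP0 hP1 hγ0 hγ1 π' s, hgap (π' s)]
  have hπ' : advantage P r γ π' s (π s) < 0 := by
    linarith [advantage_sub_advantage P r γ π π' s (π s),
      advantage_self P r hP0 hP1 hγ0 hγ1 π s, hgap (π s)]
  refine ⟨s, ⟨π' s, (mem_improvementSet_iff P r hP0 hP1 hγ0 hγ1 π s (π' s)).2 hπ⟩,
    fun heq => ?_, fun hmem => ?_⟩
  · rw [heq, advantage_self P r hP0 hP1 hγ0 hγ1] at hπ'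
    exact hπ'.false
  · exact hπ'.not_gt ((mem_improvementSet_iff P r hP0 hP1 hγ0 hγ1 π' s (π s)).1 hmem)

theorem noninclusion_property (n k : ℕ) (hn : 1 ≤ n) (hk : 1 ≤ k)
    (P : Fin n → Fin k → Fin n → ℝ) (r : Fin n → Fin k → ℝ) (γ : ℝ)
    (hP0 : ∀ s a s', 0 ≤ P s a s') (hP1 : ∀ s a, ∑ s', P s a s' = 1)
    (hγ0 : 0 ≤ γ) (hγ1 : γ < 1)
    (π π' : Fin n → Fin k) (hlt : StrictDominates P r γ π π') :
    ∃ s ∈ improvementStates P r γ π,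
      π s ≠ π' s ∧ (s, π s) ∉ improvementSet P r γ π' :=
  noninclusion_property_general n k P r γ hP0 hP1 hγ0 hγ1 π π' hlt
end

section
/- In a discounted MDP, suppose π_{i+1} = π_i ⊕ U where U is a well-defined subset of T^{π_i} whose set of states equals S^{π_i} (a greedy Policy Iteration step), and let d = |S^{π_i}| ≥ 1. Then there exist d pairwise distinct policies π^(1), …, π^(d) with π_i ≺ π^(1) ⪯ π^(2) ⪯ … ⪯ π^(d) = π_{i+1}. -/
open Matrix Finset

namespace Matrix
variable {ι : Type*} [Fintype ι] [DecidableEq ι] {M : Matrix ι ι ℝ} {γ : ℝ}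

lemma mulVec_apply_le_of_mem_rowStochastic (hM : M ∈ rowStochastic ℝ ι) {x : ι → ℝ} {c : ℝ}
    (hx : ∀ j, x j ≤ c) (i : ι) : (M *ᵥ x) i ≤ c :=
  calc (M *ᵥ x) i = ∑ j, M i j * x j := rfl
    _ ≤ ∑ j, M i j * c := by gcongr with j; exacts [nonneg_of_mem_rowStochastic hM, hx j]
    _ = c := by rw [← sum_mul, sum_row_of_mem_rowStochastic hM, one_mul]

lemma norm_mulVec_le_of_mem_rowStochastic (hM : M ∈ rowStochastic ℝ ι) (x : ι → ℝ) :
    ‖M *ᵥ x‖ ≤ ‖x‖ := by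
  refine (pi_norm_le_iff_of_nonneg (norm_nonneg x)).2 fun i => abs_le.2 ⟨?_, ?_⟩
  · have := mulVec_apply_le_of_mem_rowStochastic hM (x := -x) (c := ‖x‖)
      (fun j => (neg_le_abs (x j)).trans (norm_le_pi_norm x j)) i
    rw [mulVec_neg] at this
    exact neg_le.1 this
  · exact mulVec_apply_le_of_mem_rowStochastic hM
      (fun j => (le_abs_self (x j)).trans (norm_le_pi_norm x j)) i

lemma nonpos_of_le_smul_mulVec (hM : M ∈ rowStochastic ℝ ι) (hγ0 : 0 ≤ γ) (hγ1 : γ < 1)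
    {w : ι → ℝ} (hw : w ≤ γ • M *ᵥ w) : w ≤ 0 := by
  intro i
  have : Nonempty ι := ⟨i⟩
  obtain ⟨j, hj⟩ := Finite.exists_max w
  have hj_le : w j ≤ γ * w j := by
    calc w j ≤ γ * (M *ᵥ w) j := hw j
      _ ≤ γ * w j := by gcongr; exact mulVec_apply_le_of_mem_rowStochastic hM hj j
  exact (hj i).trans (show w j ≤ 0 by nlinarith)

lemma summable_geometric_smul_pow_mulVec (hM : M ∈ rowStochastic ℝ ι) (hγ0 : 0 ≤ γ) (hγ1 : γ < 1)
    (x : ι → ℝ) : Summable fun i : ℕ => γ ^ i • (M ^ i) *ᵥ x := by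
  refine Summable.of_norm_bounded ((summable_geometric_of_lt_one hγ0 hγ1).mul_right ‖x‖) fun i => ?_
  rw [norm_smul, Real.norm_of_nonneg (pow_nonneg hγ0 i)]
  gcongr
  exact norm_mulVec_le_of_mem_rowStochastic (pow_mem hM i) x

lemma tsum_geometric_smul_pow_mulVec (hM : M ∈ rowStochastic ℝ ι) (hγ0 : 0 ≤ γ) (hγ1 : γ < 1)
    (x : ι → ℝ) :
    ∑' i : ℕ, γ ^ i • (M ^ i) *ᵥ x = x + γ • M *ᵥ ∑' i : ℕ, γ ^ i • (M ^ i) *ᵥ x := by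
  set v := ∑' i : ℕ, γ ^ i • (M ^ i) *ᵥ x
  have hs : HasSum (fun i : ℕ => γ ^ i • (M ^ i) *ᵥ x) v :=
    (summable_geometric_smul_pow_mulVec hM hγ0 hγ1 x).hasSum
  have hshift : HasSum (fun i : ℕ => γ • M *ᵥ (γ ^ i • (M ^ i) *ᵥ x)) (v - x) := by
    simpa only [pow_succ', ← mulVec_mulVec, mulVec_smul, smul_smul, range_one, sum_singleton,
      pow_zero, one_smul, one_mulVec] using (hasSum_nat_add_iff' 1).2 hs
  have hmap : HasSum (fun i : ℕ => γ • M *ᵥ (γ ^ i • (M ^ i) *ᵥ x)) (γ • M *ᵥ v) :=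
    hs.map (γ • mulVecLin M).toAddMonoidHom
      ((continuous_const.matrix_mulVec continuous_id).const_smul γ)
  rw [← hshift.unique hmap, add_sub_cancel]

end Matrix

section Switch
variable {n k : ℕ}

lemma WellDefined.mono {U V : Set (Fin n × Fin k)} (hU : WellDefined U) (hVU : V ⊆ U) :
    WellDefined V :=
  fun s a a' ha ha' => hU s a a' (hVU ha) (hVU ha')

lemma WellDefined.injOn_fst {U : Set (Fin n × Fin k)} (hU : WellDefined U) :
    Set.InjOn Prod.fst U := by
  rintro ⟨s, a⟩ ha ⟨s', a'⟩ ha' (rfl : s = s')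
  rw [hU s a a' ha ha']

lemma switch_apply_mem_or_eq (π : Fin n → Fin k) (V : Set (Fin n × Fin k)) (s : Fin n) :
    (s, switch π V s) ∈ V ∨ switch π V s = π s := by
  unfold switch
  split_ifs with h
  exacts [Or.inl h.choose_spec, Or.inr rfl]

lemma switch_apply_of_mem {π : Fin n → Fin k} {V : Set (Fin n × Fin k)} (hV : WellDefined V)
    {s : Fin n} {a : Fin k} (h : (s, a) ∈ V) : switch π V s = a := by
  have hs : ∃ b, (s, b) ∈ V := ⟨a, h⟩
  rw [switch, dif_pos hs]
  exact hV s _ a hs.choose_spec h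

lemma switch_apply_of_forall_notMem {π : Fin n → Fin k} {V : Set (Fin n × Fin k)} {s : Fin n}
    (h : ∀ a, (s, a) ∉ V) : switch π V s = π s :=
  (switch_apply_mem_or_eq π V s).resolve_left (h _)

lemma switch_apply_congr (π : Fin n → Fin k) {V V' : Set (Fin n × Fin k)} {s : Fin n}
    (h : ∀ a, (s, a) ∈ V ↔ (s, a) ∈ V') : switch π V s = switch π V' s := by
  unfold switch
  congr! 3 <;> apply h

lemma switch_singleton (π : Fin n → Fin k) (s : Fin n) (a : Fin k) :
    switch π {(s, a)} = Function.update π s a := by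
  funext t
  rcases eq_or_ne t s with rfl | ht
  · rw [Function.update_self]
    exact switch_apply_of_mem (by simp +contextual [WellDefined]) rfl
  · rw [Function.update_of_ne ht]
    exact switch_apply_of_forall_notMem fun b hb => ht (Prod.mk.inj hb).1

lemma switch_erase (π : Fin n → Fin k) {W : Finset (Fin n × Fin k)}
    (hW : WellDefined (W : Set (Fin n × Fin k))) {p : Fin n × Fin k} (hp : p ∈ W) :
    switch π ↑(W.erase p) = Function.update (switch π ↑W) p.1 (π p.1) := by
  funext t
  rcases eq_or_ne t p.1 with rfl | ht
  · rw [Function.update_self]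
    refine switch_apply_of_forall_notMem fun b hb => ?_
    obtain ⟨hbp, hbW⟩ := mem_erase.1 hb
    exact hbp (Prod.ext rfl (hW _ _ _ hbW hp))
  · rw [Function.update_of_ne ht]
    refine switch_apply_congr π fun b => ?_
    rw [coe_erase, Set.mem_sdiff_singleton]
    exact and_iff_left fun h => ht (congrArg Prod.fst h)

lemma switch_injOn {π : Fin n → Fin k} {U : Set (Fin n × Fin k)} (hU : WellDefined U)
    (hπ : ∀ p ∈ U, p.2 ≠ π p.1) : Set.InjOn (switch π) (𝒫 U) := by
  have key : ∀ V ∈ 𝒫 U, ∀ V' ∈ 𝒫 U, switch π V = switch π V' → V ⊆ V' := by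
    rintro V hV V' - h ⟨s, a⟩ ha
    have hs : switch π V' s = a := by rw [← h]; exact switch_apply_of_mem (hU.mono hV) ha
    rcases switch_apply_mem_or_eq π V' s with h' | h'
    · rwa [hs] at h'
    · exact absurd (hs.symm.trans h') (hπ _ (hV ha))
  exact fun V hV V' hV' h => (key V hV V' hV' h).antisymm (key V' hV' V hV h.symm)

end Switch

section MDP
variable {n k : ℕ}

structure IsDiscountedMDP (P : Fin n → Fin k → Fin n → ℝ) (γ : ℝ) : Prop where
  nonneg : ∀ s a s', 0 ≤ P s a s'
  sum_eq_one : ∀ s a, ∑ s', P s a s' = 1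
  discount_nonneg : 0 ≤ γ
  discount_lt_one : γ < 1

def qValue (P : Fin n → Fin k → Fin n → ℝ) (r : Fin n → Fin k → ℝ) (γ : ℝ) (v : Fin n → ℝ)
    (s : Fin n) (a : Fin k) : ℝ :=
  r s a + γ * ∑ t, P s a t * v t

variable {P : Fin n → Fin k → Fin n → ℝ} {r : Fin n → Fin k → ℝ} {γ : ℝ}

lemma qValue_sub_qValue (v w : Fin n → ℝ) (s : Fin n) (a : Fin k) :
    qValue P r γ v s a - qValue P r γ w s a = γ * ∑ t, P s a t * (v - w) t := by
  simp only [qValue, Pi.sub_apply, mul_sub, sum_sub_distrib]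
  ring

lemma polMatrix_mulVec_apply (σ : Fin n → Fin k) (v : Fin n → ℝ) (s : Fin n) :
    (polMatrix P σ *ᵥ v) s = ∑ t, P s (σ s) t * v t :=
  rfl

lemma ne_of_mem_improvementSet {π : Fin n → Fin k} {s : Fin n} {a : Fin k}
    (h : (s, a) ∈ improvementSet P r γ π) : a ≠ π s := by
  rintro rfl
  obtain ⟨-, t, ht⟩ := h
  rw [Function.update_eq_self] at ht
  exact ht.false

namespace IsDiscountedMDP
variable (hmdp : IsDiscountedMDP P γ)
include hmdp

lemma polMatrix_mem_rowStochastic (σ : Fin n → Fin k) : polMatrix P σ ∈ rowStochastic ℝ (Fin n) :=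
  mem_rowStochastic_iff_sum.2 ⟨fun _ _ => hmdp.nonneg _ _ _, fun _ => hmdp.sum_eq_one _ _⟩

lemma polValue_apply (σ : Fin n → Fin k) (s : Fin n) :
    polValue P r γ σ s = qValue P r γ (polValue P r γ σ) s (σ s) := by
  conv_lhs => rw [polValue, tsum_geometric_smul_pow_mulVec (hmdp.polMatrix_mem_rowStochastic σ)
    hmdp.discount_nonneg hmdp.discount_lt_one]
  rfl

lemma le_polValue_of_le_qValue {σ : Fin n → Fin k} {v : Fin n → ℝ}
    (hv : ∀ s, v s ≤ qValue P r γ v s (σ s)) : v ≤ polValue P r γ σ := by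
  refine sub_nonpos.1 <| nonpos_of_le_smul_mulVec (hmdp.polMatrix_mem_rowStochastic σ)
    hmdp.discount_nonneg hmdp.discount_lt_one fun s => ?_
  have := hv s
  rw [Pi.smul_apply, smul_eq_mul, polMatrix_mulVec_apply, ← qValue_sub_qValue,
    Pi.sub_apply, ← hmdp.polValue_apply]
  linarith

lemma polValue_le_of_qValue_le {σ : Fin n → Fin k} {v : Fin n → ℝ}
    (hv : ∀ s, qValue P r γ v s (σ s) ≤ v s) : polValue P r γ σ ≤ v := by
  refine sub_nonpos.1 <| nonpos_of_le_smul_mulVec (hmdp.polMatrix_mem_rowStochastic σ)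
    hmdp.discount_nonneg hmdp.discount_lt_one fun s => ?_
  have := hv s
  rw [Pi.smul_apply, smul_eq_mul, polMatrix_mulVec_apply, ← qValue_sub_qValue,
    Pi.sub_apply, ← hmdp.polValue_apply]
  linarith

lemma dominates_update_of_qValue_le {σ : Fin n → Fin k} {s : Fin n} {a : Fin k}
    (h : qValue P r γ (polValue P r γ σ) s a ≤ polValue P r γ σ s) :
    Dominates P r γ (Function.update σ s a) σ := by
  refine hmdp.polValue_le_of_qValue_le fun t => ?_
  rcases eq_or_ne t s with rfl | ht
  · rwa [Function.update_self]
  · rw [Function.update_of_ne ht, ← hmdp.polValue_apply]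

lemma le_qValue_of_mem_improvementSet {π : Fin n → Fin k} {s : Fin n} {a : Fin k}
    (h : (s, a) ∈ improvementSet P r γ π) :
    polValue P r γ π s ≤ qValue P r γ (polValue P r γ π) s a := by
  obtain ⟨-, t, ht⟩ := h
  by_contra! hlt
  exact (ht.trans_le (hmdp.dominates_update_of_qValue_le hlt.le t)).false

lemma dominates_switch {π : Fin n → Fin k} {V : Set (Fin n × Fin k)}
    (hV : V ⊆ improvementSet P r γ π) : Dominates P r γ π (switch π V) := by
  refine hmdp.le_polValue_of_le_qValue fun s => ?_
  rcases switch_apply_mem_or_eq π V s with hs | hs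
  · exact hmdp.le_qValue_of_mem_improvementSet (hV hs)
  · rw [hs, ← hmdp.polValue_apply]

lemma exists_dominates_switch_erase {π : Fin n → Fin k} {W : Finset (Fin n × Fin k)}
    (hwd : WellDefined (W : Set (Fin n × Fin k))) (hW : ↑W ⊆ improvementSet P r γ π)
    (hne : W.Nonempty) :
    ∃ p ∈ W, Dominates P r γ (switch π ↑(W.erase p)) (switch π ↑W) := by
  set σ := switch π ↑W
  by_contra! h
  have hlt : ∀ p ∈ W, polValue P r γ σ p.1 < qValue P r γ (polValue P r γ σ) p.1 (π p.1) := by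
    intro p hp
    by_contra! hle
    exact h p hp (switch_erase π hwd hp ▸ hmdp.dominates_update_of_qValue_le hle)
  have hσπ : Dominates P r γ σ π := hmdp.le_polValue_of_le_qValue fun s => by
    rcases switch_apply_mem_or_eq π ↑W s with hs | hs
    · exact (hlt _ hs).le
    · rw [← hs, ← hmdp.polValue_apply]
  have hσ : polValue P r γ σ = polValue P r γ π := le_antisymm hσπ (hmdp.dominates_switch hW)
  obtain ⟨p, hp⟩ := hne
  have := hlt p hp
  rw [hσ, ← hmdp.polValue_apply] at this
  exact this.false

lemma exists_switch_chain {π : Fin n → Fin k} (W : Finset (Fin n × Fin k))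
    (hwd : WellDefined (W : Set (Fin n × Fin k))) (hW : ↑W ⊆ improvementSet P r γ π) :
    ∃ c : ℕ → Finset (Fin n × Fin k), (∀ j, c j ⊆ W) ∧ (∀ j ≤ #W, #(c j) = j) ∧ c #W = W ∧
      ∀ j < #W, Dominates P r γ (switch π ↑(c j)) (switch π ↑(c (j + 1))) := by
  induction W using Finset.strongInduction with
  | H W ih =>
    rcases W.eq_empty_or_nonempty with rfl | hne
    · exact ⟨fun _ => ∅, fun _ => subset_rfl, by simp, rfl, by simp⟩
    obtain ⟨p, hp, hdom⟩ := hmdp.exists_dominates_switch_erase hwd hW hne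
    have hsub : W.erase p ⊆ W := erase_subset p W
    obtain ⟨c, hcW, hcard, htop, hchain⟩ := ih _ (erase_ssubset hp)
      (hwd.mono (coe_subset.2 hsub)) ((coe_subset.2 hsub).trans hW)
    have hWp : #W = #(W.erase p) + 1 := (card_erase_add_one hp).symm
    refine ⟨fun j => if j = #W then W else c j, fun j => ?_, fun j hj => ?_, if_pos rfl,
      fun j hj => ?_⟩
    · dsimp only
      split_ifs
      exacts [subset_rfl, (hcW j).trans hsub]
    · dsimp only
      split_ifs with h
      exacts [h.symm, hcard j (by omega)]
    · dsimp only
      rw [if_neg (by omega : j ≠ #W)]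
      rcases eq_or_ne (j + 1) #W with hj' | hj'
      · rw [if_pos hj', show j = #(W.erase p) by omega, htop]
        exact hdom
      · rw [if_neg hj']
        exact hchain j (by omega)

end IsDiscountedMDP
end MDP

theorem jumping_property_general (n k : ℕ)
    (P : Fin n → Fin k → Fin n → ℝ) (r : Fin n → Fin k → ℝ) (γ : ℝ)
    (hP0 : ∀ s a s', 0 ≤ P s a s') (hP1 : ∀ s a, ∑ s', P s a s' = 1)
    (hγ0 : 0 ≤ γ) (hγ1 : γ < 1)
    (π π' : Fin n → Fin k) (U : Set (Fin n × Fin k))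
    (hwd : WellDefined U) (hsub : U ⊆ improvementSet P r γ π)
    (hstates : ∀ s, (∃ a, (s, a) ∈ U) ↔ s ∈ improvementStates P r γ π)
    (hstep : π' = switch π U) (d : ℕ)
    (hd : (improvementStates P r γ π).ncard = d) (hd1 : 1 ≤ d) :
    ∃ ρ : Fin d → Fin n → Fin k,
      Function.Injective ρ ∧
      StrictDominates P r γ π (ρ ⟨0, hd1⟩) ∧
      (∀ i : ℕ, ∀ hi : i + 1 < d,
        Dominates P r γ (ρ ⟨i, Nat.lt_of_succ_lt hi⟩) (ρ ⟨i + 1, hi⟩)) ∧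
      (∀ hl : d - 1 < d, ρ ⟨d - 1, hl⟩ = π') := by
  have hmdp : IsDiscountedMDP P γ := ⟨hP0, hP1, hγ0, hγ1⟩
  subst hstep
  lift U to Finset (Fin n × Fin k) using U.toFinite with W
  have hWd : #W = d := by
    have : Prod.fst '' (W : Set (Fin n × Fin k)) = improvementStates P r γ π := by
      ext s; simp [← hstates]
    rw [← hd, ← this, hwd.injOn_fst.ncard_image, Set.ncard_coe_finset]
  subst hWd
  obtain ⟨c, hcW, hcard, htop, hchain⟩ := hmdp.exists_switch_chain W hwd hsub
  have hcU (j : ℕ) : (c j : Set (Fin n × Fin k)) ∈ 𝒫 ↑W := coe_subset.2 (hcW j)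
  refine ⟨fun j => switch π ↑(c (j + 1)), fun i j hij => Fin.ext ?_, ?_,
    fun i hi => hchain (i + 1) (by omega), fun _ => ?_⟩
  · have := congrArg card <| coe_injective <| switch_injOn hwd
      (fun p hp => ne_of_mem_improvementSet (hsub hp)) (hcU _) (hcU _) hij
    rwa [hcard _ (by omega), hcard _ (by omega), add_left_inj] at this
  · obtain ⟨p, hp⟩ := card_eq_one.1 (hcard 1 (by omega))
    have hpW : p ∈ W := hcW 1 (hp ▸ mem_singleton_self p)
    show StrictDominates P r γ π (switch π ↑(c 1))
    rw [hp, coe_singleton, switch_singleton]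
    exact hsub hpW
  · show switch π ↑(c (#W - 1 + 1)) = switch π ↑W
    rw [Nat.sub_add_cancel hd1, htop]

theorem jumping_property (n k : ℕ) (hn : 1 ≤ n) (hk : 1 ≤ k)
    (P : Fin n → Fin k → Fin n → ℝ) (r : Fin n → Fin k → ℝ) (γ : ℝ)
    (hP0 : ∀ s a s', 0 ≤ P s a s') (hP1 : ∀ s a, ∑ s', P s a s' = 1)
    (hγ0 : 0 ≤ γ) (hγ1 : γ < 1)
    (π π' : Fin n → Fin k) (U : Set (Fin n × Fin k))
    (hwd : WellDefined U) (hsub : U ⊆ improvementSet P r γ π)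
    (hstates : ∀ s, (∃ a, (s, a) ∈ U) ↔ s ∈ improvementStates P r γ π)
    (hstep : π' = switch π U) (d : ℕ)
    (hd : (improvementStates P r γ π).ncard = d) (hd1 : 1 ≤ d) :
    ∃ ρ : Fin d → Fin n → Fin k,
      Function.Injective ρ ∧
      StrictDominates P r γ π (ρ ⟨0, hd1⟩) ∧
      (∀ i : ℕ, ∀ hi : i + 1 < d,
        Dominates P r γ (ρ ⟨i, Nat.lt_of_succ_lt hi⟩) (ρ ⟨i + 1, hi⟩)) ∧
      (∀ hl : d - 1 < d, ρ ⟨d - 1, hl⟩ = π') :=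
  jumping_property_general n k P r γ hP0 hP1 hγ0 hγ1 π π' U hwd hsub hstates hstep d hd hd1
end
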